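/- Let a, b > 0 and let Θ be uniformly distributed on [0, 2π]. Then the random variable Γ = √(a² + b² + 2ab·cos(2Θ)) has probability density ρ(γ) = (2/π)·γ/√((（a+b)²−γ²)(γ²−(a−b)²)) on (|a−b|, a+b). -/

import Mathlib

open MeasureTheory Real Set

/-!
For `0 ≤ x` the event `Γ ≤ x` is `cos 2Θ ≤ c(x)` with `c(x) = (x² - a² - b²) / (2ab)`, and
`{θ ∈ [0, 2π] | cos 2θ ≤ c}` is a union of two intervals of total length `2(π - arccos c)`.
Hence `P(Γ ≤ x) = 1 - arccos (c(x)) / π`, a continuous function of `x` that vanishes at `|a - b|`,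
equals `1` beyond `a + b`, and has derivative `ρ` in between; by the fundamental theorem of
calculus the two measures have the same distribution function.
-/

/-- Integrability of `g'` comes for free from `0 ≤ g'`, so `g'` may be unbounded at `s` and `t`. -/
theorem lintegral_Ioc_ofReal_eq_sub_of_hasDerivAt {g g' : ℝ → ℝ} {s t : ℝ} (hst : s ≤ t)
    (hcont : ContinuousOn g (Icc s t)) (hderiv : ∀ x ∈ Ioo s t, HasDerivAt g (g' x) x)
    (hg' : ∀ x ∈ Ioo s t, 0 ≤ g' x) :
    ∫⁻ x in Ioc s t, ENNReal.ofReal (g' x) = ENNReal.ofReal (g t - g s) := by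
  have hint := intervalIntegral.integrableOn_deriv_of_nonneg hcont hderiv hg'
  have hg'_ae : 0 ≤ᵐ[volume.restrict (Ioc s t)] g' := by
    rw [← Measure.restrict_congr_set Ioo_ae_eq_Ioc]
    exact (ae_restrict_iff' measurableSet_Ioo).2 (.of_forall hg')
  rw [← ofReal_integral_eq_lintegral_ofReal hint hg'_ae, ← intervalIntegral.integral_of_le hst,
    intervalIntegral.integral_eq_sub_of_hasDerivAt_of_le hst hcont hderiv
      ((intervalIntegrable_iff_integrableOn_Ioc_of_le hst).2 hint)]

namespace Real

theorem cos_le_iff_arccos_le {c v : ℝ} (hc : -1 ≤ c) (hv : v ∈ Icc 0 π) :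
    cos v ≤ c ↔ arccos c ≤ v := by
  rcases le_or_gt c 1 with hc1 | hc1
  · conv_lhs => rw [← cos_arccos hc hc1]
    exact strictAntiOn_cos.le_iff_ge hv ⟨arccos_nonneg c, arccos_le_pi c⟩
  · simp [arccos_of_one_le hc1.le, hv.1, (cos_le_one v).trans hc1.le]

theorem cos_le_iff_mem_Icc_arccos {c u : ℝ} (hc : -1 ≤ c) (hu : u ∈ Icc 0 (2 * π)) :
    cos u ≤ c ↔ u ∈ Icc (arccos c) (2 * π - arccos c) := by
  have := arccos_le_pi c
  obtain ⟨hu0, hu2π⟩ := hu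
  rcases le_total u π with huπ | hπu
  · rw [cos_le_iff_arccos_le hc ⟨hu0, huπ⟩, mem_Icc]
    exact ⟨fun h => ⟨h, by linarith⟩, And.left⟩
  · rw [← cos_two_pi_sub, cos_le_iff_arccos_le hc ⟨by linarith, by linarith⟩, mem_Icc]
    exact ⟨fun h => ⟨by linarith, by linarith⟩, fun h => by linarith [h.2]⟩

theorem setOf_cos_two_mul_le_inter_Icc {c : ℝ} (hc : -1 ≤ c) :
    {θ | cos (2 * θ) ≤ c} ∩ Icc 0 (2 * π) =
      Icc (arccos c / 2) (π - arccos c / 2) ∪ Icc (π + arccos c / 2) (2 * π - arccos c / 2) := by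
  have := arccos_nonneg c
  have := arccos_le_pi c
  ext θ
  simp only [mem_inter_iff, mem_ofPred_eq, mem_union, mem_Icc]
  constructor
  · rintro ⟨hcos, hθ0, hθ2π⟩
    rcases le_total θ π with hθπ | hπθ
    · have := (cos_le_iff_mem_Icc_arccos hc ⟨by linarith, by linarith⟩).1 hcos
      exact .inl ⟨by linarith [this.1], by linarith [this.2]⟩
    · rw [← cos_sub_two_pi] at hcos
      have := (cos_le_iff_mem_Icc_arccos hc ⟨by linarith, by linarith⟩).1 hcos
      exact .inr ⟨by linarith [this.1], by linarith [this.2]⟩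
  · rintro (⟨h1, h2⟩ | ⟨h1, h2⟩)
    · exact ⟨(cos_le_iff_mem_Icc_arccos hc ⟨by linarith, by linarith⟩).2
        ⟨by linarith, by linarith⟩, by linarith, by linarith⟩
    · refine ⟨?_, by linarith, by linarith⟩
      rw [← cos_sub_two_pi]
      exact (cos_le_iff_mem_Icc_arccos hc ⟨by linarith, by linarith⟩).2
        ⟨by linarith, by linarith⟩

theorem volume_setOf_cos_two_mul_le_inter_Icc (c : ℝ) :
    volume ({θ | cos (2 * θ) ≤ c} ∩ Icc 0 (2 * π)) = ENNReal.ofReal (2 * (π - arccos c)) := by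
  rcases lt_or_ge c (-1) with hc | hc
  · have hempty : {θ | cos (2 * θ) ≤ c} = ∅ :=
      eq_empty_of_forall_notMem fun θ h => (neg_one_le_cos (2 * θ)).not_gt (h.trans_lt hc)
    simp [hempty, arccos_of_le_neg_one hc.le]
  have := arccos_nonneg c
  have := arccos_le_pi c
  have hdisj : AEDisjoint volume (Icc (arccos c / 2) (π - arccos c / 2))
      (Icc (π + arccos c / 2) (2 * π - arccos c / 2)) :=
    measure_mono_null (fun θ ⟨h1, h2⟩ => show θ ∈ ({π} : Set ℝ) by
      rw [mem_singleton_iff]; linarith [h1.2, h2.1]) (measure_singleton π)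
  rw [setOf_cos_two_mul_le_inter_Icc hc, measure_union₀ measurableSet_Icc.nullMeasurableSet hdisj,
    volume_Icc, volume_Icc, ← ENNReal.ofReal_add (by linarith) (by linarith)]
  ring_nf

end Real

noncomputable def gapCos (a b γ : ℝ) : ℝ := (γ ^ 2 - a ^ 2 - b ^ 2) / (2 * a * b)

noncomputable def gapCDF (a b x : ℝ) : ℝ := 1 - arccos (gapCos a b x) / π

noncomputable def gapDensity (a b γ : ℝ) : ℝ :=
  2 / π * γ / √(((a + b) ^ 2 - γ ^ 2) * (γ ^ 2 - (a - b) ^ 2))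

section

variable {a b : ℝ}

theorem sqrt_le_iff_le_gapCos (ha : 0 < a) (hb : 0 < b) {t x : ℝ} (hx : 0 ≤ x) :
    √(a ^ 2 + b ^ 2 + 2 * a * b * t) ≤ x ↔ t ≤ gapCos a b x := by
  rw [sqrt_le_left hx, gapCos, le_div_iff₀ (by positivity)]
  constructor <;> intro h <;> linarith

theorem abs_sub_le_sqrt (ha : 0 ≤ a) (hb : 0 ≤ b) (φ : ℝ) :
    |a - b| ≤ √(a ^ 2 + b ^ 2 + 2 * a * b * cos φ) := by
  rw [← sqrt_sq_eq_abs]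
  exact sqrt_le_sqrt (by nlinarith [neg_one_le_cos φ, mul_nonneg ha hb])

theorem gapCos_abs_sub (ha : a ≠ 0) (hb : b ≠ 0) : gapCos a b |a - b| = -1 := by
  rw [gapCos, sq_abs, div_eq_iff (by simp [ha, hb])]
  ring

theorem gapCos_add (ha : a ≠ 0) (hb : b ≠ 0) : gapCos a b (a + b) = 1 := by
  rw [gapCos, div_eq_iff (by simp [ha, hb])]
  ring

theorem gapCos_strictMonoOn (ha : 0 < a) (hb : 0 < b) : StrictMonoOn (gapCos a b) (Ici 0) :=
  fun x hx _ _ hxy => by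
    unfold gapCos
    gcongr

theorem one_sub_gapCos_sq (ha : a ≠ 0) (hb : b ≠ 0) (γ : ℝ) :
    1 - gapCos a b γ ^ 2 = ((a + b) ^ 2 - γ ^ 2) * (γ ^ 2 - (a - b) ^ 2) / (2 * a * b) ^ 2 := by
  rw [gapCos]
  field_simp
  ring

theorem hasDerivAt_gapCos (a b γ : ℝ) : HasDerivAt (gapCos a b) (2 * γ / (2 * a * b)) γ := by
  show HasDerivAt (fun x => (x ^ 2 - a ^ 2 - b ^ 2) / (2 * a * b)) _ γ
  simpa using (((hasDerivAt_pow 2 γ).sub_const (a ^ 2)).sub_const (b ^ 2)).div_const (2 * a * b)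

theorem continuous_gapCDF (a b : ℝ) : Continuous (gapCDF a b) := by
  unfold gapCDF gapCos
  fun_prop

theorem gapCDF_abs_sub (ha : 0 < a) (hb : 0 < b) : gapCDF a b |a - b| = 0 := by
  rw [gapCDF, gapCos_abs_sub ha.ne' hb.ne', arccos_neg_one, div_self pi_ne_zero, sub_self]

theorem gapCDF_of_add_le (ha : 0 < a) (hb : 0 < b) {x : ℝ} (hx : a + b ≤ x) :
    gapCDF a b x = 1 := by
  have : 1 ≤ gapCos a b x := gapCos_add ha.ne' hb.ne' ▸
    (gapCos_strictMonoOn ha hb).monotoneOn (mem_Ici.2 (by positivity))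
      (mem_Ici.2 (by linarith)) hx
  rw [gapCDF, arccos_of_one_le this, zero_div, sub_zero]

theorem hasDerivAt_gapCDF (ha : 0 < a) (hb : 0 < b) {γ : ℝ} (hγ : γ ∈ Ioo |a - b| (a + b)) :
    HasDerivAt (gapCDF a b) (gapDensity a b γ) γ := by
  have hγ0 : 0 < γ := (abs_nonneg _).trans_lt hγ.1
  have hmono := gapCos_strictMonoOn ha hb
  have hlow : -1 < gapCos a b γ := gapCos_abs_sub ha.ne' hb.ne' ▸
    hmono (abs_nonneg (a - b)) hγ0.le hγ.1
  have hup : gapCos a b γ < 1 := gapCos_add ha.ne' hb.ne' ▸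
    hmono hγ0.le (mem_Ici.2 (by positivity)) hγ.2
  have hP : 0 < ((a + b) ^ 2 - γ ^ 2) * (γ ^ 2 - (a - b) ^ 2) := by
    have h : 0 < 1 - gapCos a b γ ^ 2 := by nlinarith
    rw [one_sub_gapCos_sq ha.ne' hb.ne'] at h
    exact (div_pos_iff_of_pos_right (by positivity)).1 h
  have hsqrt : √(1 - gapCos a b γ ^ 2) =
      √(((a + b) ^ 2 - γ ^ 2) * (γ ^ 2 - (a - b) ^ 2)) / (2 * a * b) := by
    rw [one_sub_gapCos_sq ha.ne' hb.ne', sqrt_div' _ (sq_nonneg _), sqrt_sq (by positivity)]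
  refine ((((hasDerivAt_arccos hlow.ne' hup.ne).comp γ (hasDerivAt_gapCos a b γ)).div_const
    π).const_sub 1).congr_deriv ?_
  rw [gapDensity, hsqrt]
  field_simp

theorem lintegral_gapDensity_Ioc (ha : 0 < a) (hb : 0 < b) {x : ℝ} (hx : |a - b| ≤ x) :
    ∫⁻ γ in Ioc |a - b| (min (a + b) x), ENNReal.ofReal (gapDensity a b γ) =
      ENNReal.ofReal (gapCDF a b x) := by
  have hx' : |a - b| ≤ min (a + b) x := le_min (abs_sub_le_iff.2 ⟨by linarith, by linarith⟩) hx
  rw [lintegral_Ioc_ofReal_eq_sub_of_hasDerivAt hx' (continuous_gapCDF a b).continuousOn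
    (fun γ hγ => hasDerivAt_gapCDF ha hb ⟨hγ.1, hγ.2.trans_le (min_le_left _ _)⟩)
    (fun γ hγ => ?_), gapCDF_abs_sub ha hb, sub_zero]
  · rcases le_total (a + b) x with hrx | hxr
    · rw [min_eq_left hrx, gapCDF_of_add_le ha hb le_rfl, gapCDF_of_add_le ha hb hrx]
    · rw [min_eq_right hxr]
  · have hγ0 : 0 ≤ γ := (abs_nonneg _).trans hγ.1.le
    unfold gapDensity
    positivity

theorem map_uniform_gap_Iic (ha : 0 < a) (hb : 0 < b) {x : ℝ} (hx : 0 ≤ x) :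
    Measure.map (fun θ => √(a ^ 2 + b ^ 2 + 2 * a * b * cos (2 * θ)))
      ((volume.restrict (Icc 0 (2 * π))).withDensity fun _ => ENNReal.ofReal (1 / (2 * π)))
      (Iic x) = ENNReal.ofReal (gapCDF a b x) := by
  have hpre : (fun θ => √(a ^ 2 + b ^ 2 + 2 * a * b * cos (2 * θ))) ⁻¹' Iic x =
      {θ | cos (2 * θ) ≤ gapCos a b x} := by
    ext θ
    exact sqrt_le_iff_le_gapCos ha hb hx
  have hΓ : Measurable fun θ => √(a ^ 2 + b ^ 2 + 2 * a * b * cos (2 * θ)) := by fun_prop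
  rw [Measure.map_apply hΓ measurableSet_Iic, withDensity_const, Measure.smul_apply,
    Measure.restrict_apply (hΓ measurableSet_Iic), hpre, volume_setOf_cos_two_mul_le_inter_Icc,
    smul_eq_mul, ← ENNReal.ofReal_mul (by positivity), gapCDF]
  congr 1
  field_simp

theorem map_uniform_gap_Iic_of_lt (ha : 0 < a) (hb : 0 < b) {x : ℝ} (hx : x < |a - b|) :
    Measure.map (fun θ => √(a ^ 2 + b ^ 2 + 2 * a * b * cos (2 * θ)))
      ((volume.restrict (Icc 0 (2 * π))).withDensity fun _ => ENNReal.ofReal (1 / (2 * π)))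
      (Iic x) = 0 := by
  have hpre : (fun θ => √(a ^ 2 + b ^ 2 + 2 * a * b * cos (2 * θ))) ⁻¹' Iic x = ∅ :=
    eq_empty_of_forall_notMem fun θ hθ => hx.not_ge ((abs_sub_le_sqrt ha.le hb.le _).trans hθ)
  rw [Measure.map_apply (by fun_prop) measurableSet_Iic, hpre, measure_empty]

end

/-- If `Θ` is uniform on `[0, 2π]`, then `Γ = √(a² + b² + 2ab cos(2Θ))` has density
`(2/π)·γ/√(((a+b)²−γ²)(γ²−(a−b)²))` on `(|a−b|, a+b)`. -/
theorem symmetric_gap_pushforward (a b : ℝ) (ha : 0 < a) (hb : 0 < b) :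
    Measure.map (fun θ => Real.sqrt (a ^ 2 + b ^ 2 + 2 * a * b * Real.cos (2 * θ)))
      ((volume.restrict (Icc 0 (2 * π))).withDensity fun _ => ENNReal.ofReal (1 / (2 * π))) =
    volume.withDensity fun γ =>
      ENNReal.ofReal
        (if |a - b| < γ ∧ γ < a + b then
          (2 / π) * γ / Real.sqrt (((a + b) ^ 2 - γ ^ 2) * (γ ^ 2 - (a - b) ^ 2))
        else 0) := by
  have hdensity : (fun γ => ENNReal.ofReal
      (if |a - b| < γ ∧ γ < a + b then
        (2 / π) * γ / Real.sqrt (((a + b) ^ 2 - γ ^ 2) * (γ ^ 2 - (a - b) ^ 2)) else 0)) =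
      (Ioo |a - b| (a + b)).indicator fun γ => ENNReal.ofReal (gapDensity a b γ) := by
    ext γ
    simp only [indicator_apply, mem_Ioo, gapDensity]
    split_ifs <;> simp
  rw [hdensity, withDensity_indicator measurableSet_Ioo,
    Measure.restrict_congr_set Ioo_ae_eq_Ioc]
  have := isFiniteMeasure_withDensity_ofReal (μ := volume.restrict (Icc 0 (2 * π)))
    (hasFiniteIntegral_const (1 / (2 * π)))
  refine Measure.ext_of_Iic _ _ fun x => ?_
  rw [withDensity_apply _ measurableSet_Iic, Measure.restrict_restrict measurableSet_Iic,
    inter_comm, Ioc_inter_Iic]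
  rcases lt_or_ge x |a - b| with hx | hx
  · rw [map_uniform_gap_Iic_of_lt ha hb hx,
      Ioc_eq_empty_of_le ((min_le_right _ _).trans hx.le), Measure.restrict_empty,
      lintegral_zero_measure]
  · rw [map_uniform_gap_Iic ha hb ((abs_nonneg _).trans hx), lintegral_gapDensity_Ioc ha hb hx]
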